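/- Let k be a field, λ₁ ≠ λ₂ nonzero in k, and X' = (k², k²; id, diag(λ₁,λ₂), γ) with γ(e(1)) = e(2), γ(e(2)) = 0, a representation of the 3-Kronecker quiver. Then Ext¹(Y, X') has k-dimension 2, where Y = (k, k; 1, 0, 0). -/

import Mathlib

/- dim Ext¹(Y, X') = 2 where X' = (k², k²; id, diag(λ₁,λ₂), γ) with γ(e1) = e2, γ(e2) = 0,
   and Y = (k,k;1,0,0).  Ext¹(Y,X') is the cokernel of (v,w) ↦ (α v − w, β v, γ v). -/

def betaTwo (k : Type) [Field k] (l₁ l₂ : k) : (Fin 2 → k) →ₗ[k] (Fin 2 → k) where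
  toFun v := ![l₁ * v 0, l₂ * v 1]
  map_add' u v := by funext i; fin_cases i <;> simp [mul_add]
  map_smul' c v := by funext i; fin_cases i <;> (simp; ring)

/-- γ with γ(e 0) = e 1, γ(e 1) = 0. -/
def gammaNilp (k : Type) [Field k] : (Fin 2 → k) →ₗ[k] (Fin 2 → k) where
  toFun v := ![0, v 0]
  map_add' u v := by funext i; fin_cases i <;> simp
  map_smul' c v := by funext i; fin_cases i <;> simp

noncomputable def extMap' (k : Type) [Field k] (l₁ l₂ : k) :
    ((Fin 2 → k) × (Fin 2 → k)) →ₗ[k] ((Fin 2 → k) × (Fin 2 → k) × (Fin 2 → k)) :=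
  (LinearMap.fst k (Fin 2 → k) (Fin 2 → k) - LinearMap.snd k (Fin 2 → k) (Fin 2 → k)).prod
    (((betaTwo k l₁ l₂).comp (LinearMap.fst k (Fin 2 → k) (Fin 2 → k))).prod
      ((gammaNilp k).comp (LinearMap.fst k (Fin 2 → k) (Fin 2 → k))))

/-! Since `γ v = 0` forces `v 0 = 0` and then `β v = 0` forces `v 1 = 0` (as `l₂ ≠ 0`), the map
`(v, w) ↦ (v - w, β v, γ v)` is injective. Its cokernel therefore has dimension `6 - 4 = 2`. -/

theorem LinearMap.injective_sub_prod_comp_fst {R V W : Type*} [Ring R] [AddCommGroup V]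
    [Module R V] [AddCommGroup W] [Module R W] {f g : V →ₗ[R] W}
    (hfg : Disjoint (ker f) (ker g)) :
    Function.Injective
      ((fst R V V - snd R V V).prod ((f.comp (fst R V V)).prod (g.comp (fst R V V)))) := by
  rw [injective_iff_map_eq_zero]
  rintro ⟨v, w⟩ h
  simp only [prod_apply, sub_apply, comp_apply, fst_apply, snd_apply, Function.prod,
    Prod.mk_eq_zero, sub_eq_zero] at h
  obtain ⟨rfl, hf, hg⟩ := h
  have hv : v = 0 := Submodule.disjoint_def.mp hfg v hf hg
  simp [hv]

theorem disjoint_ker_betaTwo_ker_gammaNilp (k : Type) [Field k] (l₁ l₂ : k) (h2 : l₂ ≠ 0) :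
    Disjoint (LinearMap.ker (betaTwo k l₁ l₂)) (LinearMap.ker (gammaNilp k)) := by
  rw [Submodule.disjoint_def]
  intro v hβ hγ
  have hv0 : v 0 = 0 := by simpa [gammaNilp] using congrFun hγ 1
  have hv1 : v 1 = 0 := by simpa [betaTwo, h2] using congrFun hβ 1
  ext i
  fin_cases i <;> assumption

theorem stmt11_general (k : Type) [Field k] (l₁ l₂ : k)
    (h2 : l₂ ≠ 0) :
    Module.finrank k
      (((Fin 2 → k) × (Fin 2 → k) × (Fin 2 → k)) ⧸ LinearMap.range (extMap' k l₁ l₂)) = 2 := by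
  have hinj : Function.Injective (extMap' k l₁ l₂) :=
    LinearMap.injective_sub_prod_comp_fst (disjoint_ker_betaTwo_ker_gammaNilp k l₁ l₂ h2)
  rw [Submodule.finrank_quotient, LinearMap.finrank_range_of_inj hinj]
  simp [Module.finrank_prod]

theorem stmt11 (k : Type) [Field k] (l₁ l₂ : k)
    (h1 : l₁ ≠ 0) (h2 : l₂ ≠ 0) (h12 : l₁ ≠ l₂) :
    Module.finrank k
      (((Fin 2 → k) × (Fin 2 → k) × (Fin 2 → k)) ⧸ LinearMap.range (extMap' k l₁ l₂)) = 2 :=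
  stmt11_general k l₁ l₂ h2
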